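/- For a circle partitioned into n ≥ 3 arcs by n marked points, the number of disjoint pairs among the n side disks is at least (n−2)(n−3)/2. -/

import Mathlib

open EuclideanGeometry Metric Real

/-!
Two side disks meet only if the distance of their centres is at most the sum of their radii;
in terms of the quarter arc lengths `a`, `c` and half the angle `A` between the arc midpoints
this reads `sin A ≤ sin a + sin c`. For four arcs `a, b, c, d` in cyclic order, sine estimates
turn the two conditions for the pairs `(a, c)` and `(b, d)` into `2 sin b sin d ≤ sin a sin c`
and `2 sin a sin c ≤ sin b sin d`, which is absurd. So the meeting pairs, read as chords of an
`n`-gon, do not cross; there are at most `2n - 3` such chords (the `n` sides and at most `n - 3`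
diagonals), which leaves at least `C(n, 2) - (2n - 3) = C(n - 2, 2)` disjoint pairs.
-/

/-- The point at angle `θ` on the circle centered at `O` with radius `r`
in the Euclidean plane. -/
noncomputable def circlePt (O : EuclideanSpace ℝ (Fin 2)) (r θ : ℝ) :
    EuclideanSpace ℝ (Fin 2) :=
  O + r • (WithLp.equiv 2 (Fin 2 → ℝ)).symm ![Real.cos θ, Real.sin θ]

/-- The side disk of the arc from angle `a` to angle `b` (traversed in increasing angle)
of the circle centered at `O` with radius `r`: the closed disk centered at the midpoint
of the arc whose boundary passes through the two endpoints of the arc. -/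
noncomputable def sideDisk (O : EuclideanSpace ℝ (Fin 2)) (r a b : ℝ) :
    Set (EuclideanSpace ℝ (Fin 2)) :=
  Metric.closedBall (circlePt O r ((a + b) / 2))
    (dist (circlePt O r ((a + b) / 2)) (circlePt O r a))

theorem dist_circlePt (O : EuclideanSpace ℝ (Fin 2)) {r : ℝ} (hr : 0 ≤ r) (u v : ℝ) :
    dist (circlePt O r u) (circlePt O r v) = 2 * r * |sin ((u - v) / 2)| := by
  have hchord : (cos u - cos v) ^ 2 + (sin u - sin v) ^ 2 = (2 * sin ((u - v) / 2)) ^ 2 := by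
    have h := cos_sq ((u - v) / 2)
    rw [show 2 * ((u - v) / 2) = u - v by ring, cos_sub] at h
    linear_combination sin_sq_add_cos_sq u + sin_sq_add_cos_sq v
      - 4 * sin_sq_add_cos_sq ((u - v) / 2) + 4 * h
  rw [circlePt, circlePt, dist_add_left, dist_smul₀, Real.norm_eq_abs, abs_of_nonneg hr,
    EuclideanSpace.dist_eq]
  simp only [WithLp.equiv_symm_apply, PiLp.toLp_apply, Fin.sum_univ_two, Real.dist_eq, sq_abs,
    Matrix.cons_val_zero, Matrix.cons_val_one]
  rw [hchord, sqrt_sq_eq_abs, abs_mul, abs_two]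
  ring

theorem sideDisk_eq_closedBall (O : EuclideanSpace ℝ (Fin 2)) {r a b : ℝ} (hr : 0 ≤ r)
    (hab : a ≤ b) (hba : b - a ≤ 4 * π) :
    sideDisk O r a b = closedBall (circlePt O r ((a + b) / 2)) (2 * r * sin ((b - a) / 4)) := by
  rw [sideDisk, dist_circlePt O hr, show ((a + b) / 2 - a) / 2 = (b - a) / 4 by ring,
    abs_of_nonneg (sin_nonneg_of_nonneg_of_le_pi (by linarith) (by linarith))]

theorem sin_le_sin_add_sin_of_sideDisk_inter_nonempty (O : EuclideanSpace ℝ (Fin 2))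
    {r a b c d : ℝ} (hr : 0 < r) (hab : a ≤ b) (hba : b - a ≤ 4 * π) (hcd : c ≤ d)
    (hdc : d - c ≤ 4 * π) (h : (sideDisk O r a b ∩ sideDisk O r c d).Nonempty) :
    sin ((c + d - (a + b)) / 4) ≤ sin ((b - a) / 4) + sin ((d - c) / 4) := by
  rw [sideDisk_eq_closedBall O hr.le hab hba, sideDisk_eq_closedBall O hr.le hcd hdc] at h
  have hdist := not_lt.1 fun hlt =>
    Set.not_disjoint_iff_nonempty_inter.2 h (closedBall_disjoint_closedBall hlt)
  rw [dist_circlePt O hr.le, show ((a + b) / 2 - (c + d) / 2) / 2 = -((c + d - (a + b)) / 4) by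
    ring, sin_neg, abs_neg, ← mul_add] at hdist
  exact (le_abs_self _).trans (le_of_mul_le_mul_left hdist (by positivity))

theorem sin_add_sin_sub_sin_add_le_mul_sin {x z : ℝ} (hx : 0 ≤ x) (hz : 0 ≤ z)
    (hxz : x + z ≤ π / 2) : sin x + sin z - sin (x + z) ≤ sin x * sin z := by
  obtain ⟨u, rfl⟩ : ∃ u, x = 2 * u := ⟨x / 2, by ring⟩
  obtain ⟨v, rfl⟩ : ∃ v, z = 2 * v := ⟨z / 2, by ring⟩
  have hu : 0 ≤ sin u := sin_nonneg_of_nonneg_of_le_pi (by linarith) (by linarith [pi_pos])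
  have hv : 0 ≤ sin v := sin_nonneg_of_nonneg_of_le_pi (by linarith) (by linarith [pi_pos])
  have hsc : sin (u + v) ≤ cos (u + v) := by
    rw [← sin_pi_div_two_sub]
    exact sin_le_sin_of_le_of_le_pi_div_two (by linarith) (by linarith) (by linarith)
  rw [show 2 * u + 2 * v = 2 * (u + v) by ring, sin_two_mul, sin_two_mul, sin_two_mul]
  rw [sin_add, cos_add] at hsc ⊢
  have key : 2 * sin u * cos u * (2 * sin v * cos v) - (2 * sin u * cos u + 2 * sin v * cos v
      - 2 * (sin u * cos v + cos u * sin v) * (cos u * cos v - sin u * sin v))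
      = 4 * (sin u * sin v) * ((cos u * cos v - sin u * sin v) - (sin u * cos v + cos u * sin v))
        + 4 * (sin u * sin v) ^ 2 := by
    linear_combination (2 * sin u * cos u) * sin_sq_add_cos_sq v
      + (2 * sin v * cos v) * sin_sq_add_cos_sq u
  nlinarith [mul_nonneg (mul_nonneg hu hv) (sub_nonneg.2 hsc), sq_nonneg (sin u * sin v)]

theorem sin_add_two_mul_sin_mul_sin_le_sin_of_le_pi_div_two {y e f X : ℝ} (hy : 0 ≤ y)
    (he : 0 ≤ e) (hf : 0 ≤ f) (h : y + e + f ≤ π / 2) (hX₁ : y + 2 * e ≤ X) (hX₂ : X ≤ π / 2) :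
    sin y + 2 * (sin e * sin f) ≤ sin X := by
  have hshift : sin (y + 2 * e) = sin y + 2 * (cos (y + e) * sin e) := by
    rw [show y + 2 * e = (y + e) + e by ring, show y = (y + e) - e by ring, sin_add, sin_sub]
    ring_nf
  have hcos : sin f ≤ cos (y + e) := by
    rw [← cos_pi_div_two_sub]
    exact cos_le_cos_of_nonneg_of_le_pi (by linarith) (by linarith [pi_pos]) (by linarith)
  have hse : 0 ≤ sin e := sin_nonneg_of_nonneg_of_le_pi he (by linarith [pi_pos])
  have hmono : sin (y + 2 * e) ≤ sin X :=
    sin_le_sin_of_le_of_le_pi_div_two (by linarith [pi_pos]) hX₂ hX₁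
  nlinarith [mul_le_mul_of_nonneg_right hcos hse]

theorem sin_add_two_mul_sin_mul_sin_le_sin {y e f X : ℝ} (hy : 0 ≤ y) (he : 0 ≤ e)
    (hf : 0 ≤ f) (h : y + e + f ≤ π / 2) (hX₁ : y + 2 * e ≤ X) (hX₂ : X ≤ π - (y + 2 * f)) :
    sin y + 2 * (sin e * sin f) ≤ sin X := by
  rcases le_total X (π / 2) with hX | hX
  · exact sin_add_two_mul_sin_mul_sin_le_sin_of_le_pi_div_two hy he hf h hX₁ hX
  · rw [← sin_pi_sub X, mul_comm (sin e)]
    exact sin_add_two_mul_sin_mul_sin_le_sin_of_le_pi_div_two hy hf he (by linarith)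
      (by linarith) (by linarith)

theorem two_mul_sin_mul_sin_le_of_sin_le_sin_add_sin {x z e f X : ℝ} (hx : 0 ≤ x) (hz : 0 ≤ z)
    (he : 0 ≤ e) (hf : 0 ≤ f) (h : x + z + e + f ≤ π / 2) (hX₁ : x + z + 2 * e ≤ X)
    (hX₂ : X ≤ π - (x + z + 2 * f)) (hX : sin X ≤ sin x + sin z) :
    2 * (sin e * sin f) ≤ sin x * sin z := by
  have := sin_add_two_mul_sin_mul_sin_le_sin (add_nonneg hx hz) he hf h hX₁ hX₂
  have := sin_add_sin_sub_sin_add_le_mul_sin hx hz (by linarith)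
  linarith

theorem not_sin_le_sin_add_sin_of_interleaved {a b c d A B : ℝ} (ha : 0 < a) (hb : 0 < b)
    (hc : 0 < c) (hd : 0 < d) (h : a + b + c + d ≤ π / 2)
    (hA₁ : a + c + 2 * b ≤ A) (hA₂ : A ≤ π - (a + c + 2 * d))
    (hB₁ : b + d + 2 * c ≤ B) (hB₂ : B ≤ π - (b + d + 2 * a))
    (hA : sin A ≤ sin a + sin c) : ¬ sin B ≤ sin b + sin d := by
  intro hB
  have hsin : ∀ {t}, 0 < t → t ≤ π / 2 → 0 < sin t := fun ht ht' =>
    sin_pos_of_pos_of_lt_pi ht (by linarith [pi_pos])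
  have hac : 0 < sin a * sin c := mul_pos (hsin ha (by linarith)) (hsin hc (by linarith))
  have := two_mul_sin_mul_sin_le_of_sin_le_sin_add_sin ha.le hc.le hb.le hd.le (by linarith)
    hA₁ hA₂ hA
  have := two_mul_sin_mul_sin_le_of_sin_le_sin_add_sin hb.le hd.le hc.le ha.le (by linarith)
    hB₁ hB₂ hB
  linarith

theorem sideDisk_inter_eq_empty_of_interleaved (O : EuclideanSpace ℝ (Fin 2)) {r : ℝ}
    (hr : 0 < r) {a₀ a₁ b₀ b₁ c₀ c₁ d₀ d₁ : ℝ} (ha : a₀ < a₁) (hab : a₁ ≤ b₀) (hb : b₀ < b₁)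
    (hbc : b₁ ≤ c₀) (hc : c₀ < c₁) (hcd : c₁ ≤ d₀) (hd : d₀ < d₁) (hda : d₁ ≤ a₀ + 2 * π)
    (hac : (sideDisk O r a₀ a₁ ∩ sideDisk O r c₀ c₁).Nonempty) :
    sideDisk O r b₀ b₁ ∩ sideDisk O r d₀ d₁ = ∅ := by
  rw [← Set.not_nonempty_iff_eq_empty]
  intro hbd
  have hπ := pi_pos
  refine not_sin_le_sin_add_sin_of_interleaved (a := (a₁ - a₀) / 4) (b := (b₁ - b₀) / 4)
    (c := (c₁ - c₀) / 4) (d := (d₁ - d₀) / 4) (by linarith) (by linarith) (by linarith)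
    (by linarith) (by linarith) (by linarith) (by linarith) (by linarith) (by linarith)
    (sin_le_sin_add_sin_of_sideDisk_inter_nonempty O hr ha.le (by linarith) hc.le
      (by linarith) hac)
    (sin_le_sin_add_sin_of_sideDisk_inter_nonempty O hr hb.le (by linarith) hd.le
      (by linarith) hbd)

-- `(i, j)` with `i < j` is the chord between vertices `i` and `j` of a convex polygon.
def Crosses (p q : ℕ × ℕ) : Prop :=
  p.1 < q.1 ∧ q.1 < p.2 ∧ p.2 < q.2

theorem sideDisk_inter_eq_empty_of_crosses (O : EuclideanSpace ℝ (Fin 2)) {r : ℝ} (hr : 0 < r)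
    {n : ℕ} {θ : ℕ → ℝ} (hmono : StrictMono θ) (hper : ∀ m, θ (m + n) = θ m + 2 * π)
    {p q : ℕ × ℕ} (hpq : Crosses p q) (hq : q.2 < n)
    (hp : (sideDisk O r (θ p.1) (θ (p.1 + 1)) ∩ sideDisk O r (θ p.2) (θ (p.2 + 1))).Nonempty) :
    sideDisk O r (θ q.1) (θ (q.1 + 1)) ∩ sideDisk O r (θ q.2) (θ (q.2 + 1)) = ∅ := by
  obtain ⟨h₁, h₂, h₃⟩ := hpq
  have hlast : θ (q.2 + 1) ≤ θ p.1 + 2 * π := by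
    rw [← hper]; exact hmono.monotone (by omega)
  exact sideDisk_inter_eq_empty_of_interleaved O hr (hmono (lt_add_one _))
    (hmono.monotone h₁) (hmono (lt_add_one _)) (hmono.monotone h₂) (hmono (lt_add_one _))
    (hmono.monotone h₃) (hmono (lt_add_one _)) hlast hp

open Finset

-- Send a diagonal `(i, j)` to the largest `k < j` such that `(i, k)` is a side or lies in `S`;
-- as no two chords cross, this is injective.
theorem card_le_of_not_crosses_of_add_two_le (m : ℕ) (S : Finset (ℕ × ℕ))
    (hS : ∀ p ∈ S, p.1 + 2 ≤ p.2 ∧ p.2 ≤ m) (hcross : ∀ p ∈ S, ∀ q ∈ S, ¬ Crosses p q) :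
    #S ≤ m - 1 := by
  classical
  let F : ℕ × ℕ → Finset ℕ := fun p => {k ∈ Ioo p.1 p.2 | k = p.1 + 1 ∨ (p.1, k) ∈ S}
  let g : ℕ × ℕ → ℕ := fun p => (F p).sup id
  have hF : ∀ {p k}, k ∈ F p ↔ (p.1 < k ∧ k < p.2) ∧ (k = p.1 + 1 ∨ (p.1, k) ∈ S) := by
    simp only [F, mem_filter, mem_Ioo, implies_true]
  have hg_mem : ∀ p ∈ S, g p ∈ F p := fun p hp => by
    have := hS p hp
    obtain ⟨k, hk, hgk⟩ := exists_mem_eq_sup (F p) ⟨p.1 + 1, hF.2 ⟨by omega, .inl rfl⟩⟩ id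
    simpa only [g, hgk, id] using hk
  have hg_max : ∀ p, ∀ k ∈ F p, k ≤ g p := fun p k hk => le_sup (f := id) hk
  have hnot_lt : ∀ p ∈ S, ∀ q ∈ S, g p = g q → ¬ (p.1 < q.1 ∨ p.1 = q.1 ∧ p.2 < q.2) := by
    rintro p hp q hq hpq (hlt | ⟨heq, hlt⟩)
    · obtain ⟨⟨hp₁, -⟩, hp₂⟩ := hF.1 (hg_mem p hp)
      obtain ⟨⟨hq₁, hq₂⟩, -⟩ := hF.1 (hg_mem q hq)
      have hchord : (p.1, g p) ∈ S := hp₂.resolve_left (by omega)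
      exact hcross _ hchord q hq ⟨hlt, by omega, by omega⟩
    · have : p.2 ∈ F q := hF.2 ⟨⟨by have := hS p hp; omega, hlt⟩, .inr (by rw [← heq]; exact hp)⟩
      have := hg_max q _ this
      have := (hF.1 (hg_mem p hp)).1.2
      omega
  calc #S ≤ #(Ioo 0 m) := card_le_card_of_injOn g
        (fun p hp => by
          have := (hF.1 (hg_mem p hp)).1; have := hS p hp; rw [mem_coe, mem_Ioo]; omega)
        (fun p hp q hq hpq => by
          have := hnot_lt p hp q hq hpq; have := hnot_lt q hq p hp hpq.symm
          exact Prod.ext (by omega) (by omega))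
    _ = m - 1 := by simp

theorem card_le_of_not_crosses (n : ℕ) (S : Finset (ℕ × ℕ))
    (hS : ∀ p ∈ S, p.1 < p.2 ∧ p.2 < n) (hcross : ∀ p ∈ S, ∀ q ∈ S, ¬ Crosses p q) :
    #S ≤ 2 * n - 3 := by
  classical
  have hsides : #{p ∈ S | p.2 = p.1 + 1} ≤ n - 1 := by
    calc _ ≤ #(range (n - 1)) := card_le_card_of_injOn Prod.fst
          (fun p hp => by
            simp only [coe_filter, Set.mem_ofPred_eq] at hp
            have := hS p hp.1; rw [mem_coe, mem_range]; omega)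
          (fun p hp q hq hpq => by
            simp only [coe_filter, Set.mem_ofPred_eq] at hp hq
            exact Prod.ext hpq (by omega))
      _ = n - 1 := card_range _
  have hdiags : #{p ∈ S | ¬ p.2 = p.1 + 1} ≤ n - 1 - 1 :=
    card_le_of_not_crosses_of_add_two_le (n - 1) _
      (fun p hp => by rw [mem_filter] at hp; have := hS p hp.1; omega)
      (fun p hp q hq => hcross p (mem_filter.1 hp).1 q (mem_filter.1 hq).1)
  have := card_filter_add_card_filter_not (s := S) (fun p => p.2 = p.1 + 1)
  omega

theorem choose_two_sub_two_add (n : ℕ) : (n - 2).choose 2 + (2 * n - 3) = n.choose 2 := by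
  match n with
  | 0 | 1 => rfl
  | m + 2 =>
    simp only [Nat.add_sub_cancel, Nat.choose_succ_succ', Nat.choose_zero_right,
      Nat.choose_one_right, Nat.reduceAdd]
    omega

theorem stmt_10_general (O : EuclideanSpace ℝ (Fin 2)) (r : ℝ) (hr : 0 < r)
    (n : ℕ) (θ : ℕ → ℝ) (hmono : StrictMono θ)
    (hper : ∀ m, θ (m + n) = θ m + 2 * π) :
    (n - 2) * (n - 3) / 2 ≤
      {p : ℕ × ℕ | p.1 < p.2 ∧ p.2 < n ∧
        sideDisk O r (θ p.1) (θ (p.1 + 1)) ∩ sideDisk O r (θ p.2) (θ (p.2 + 1)) = ∅}.ncard := by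
  classical
  let Apart (p : ℕ × ℕ) : Prop :=
    sideDisk O r (θ p.1) (θ (p.1 + 1)) ∩ sideDisk O r (θ p.2) (θ (p.2 + 1)) = ∅
  let P : Finset (ℕ × ℕ) := {p ∈ range n ×ˢ range n | p.1 < p.2}
  have hP : ∀ {p}, p ∈ P ↔ p.1 < p.2 ∧ p.2 < n := by
    simp only [P, mem_filter, mem_product, mem_range]; omega
  have hset : {p : ℕ × ℕ | p.1 < p.2 ∧ p.2 < n ∧ Apart p} = ↑(P.filter Apart) := by
    ext p; simp only [Set.mem_ofPred_eq, coe_filter, hP, and_assoc]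
  have hmeet : #{p ∈ P | ¬ Apart p} ≤ 2 * n - 3 :=
    card_le_of_not_crosses n _ (fun p hp => hP.1 (mem_filter.1 hp).1)
      fun p hp q hq hpq => (mem_filter.1 hq).2 <|
        sideDisk_inter_eq_empty_of_crosses O hr hmono hper hpq (hP.1 (mem_filter.1 hq).1).2
          (Set.nonempty_iff_ne_empty.2 (mem_filter.1 hp).2)
  have hsplit := card_filter_add_card_filter_not (s := P) Apart
  rw [card_product_filter_lt, card_range] at hsplit
  have hchoose := choose_two_sub_two_add n
  rw [Nat.choose_two_right, show n - 2 - 1 = n - 3 by omega] at hchoose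
  rw [hset, Set.ncard_coe_finset]
  omega

/-- For a circle partitioned into `n ≥ 3` arcs, the number of disjoint pairs of side disks
is at least `(n-2)(n-3)/2`. -/
theorem stmt_10 (O : EuclideanSpace ℝ (Fin 2)) (r : ℝ) (hr : 0 < r)
    (n : ℕ) (hn : 3 ≤ n) (θ : ℕ → ℝ) (hmono : StrictMono θ)
    (hper : ∀ m, θ (m + n) = θ m + 2 * π) :
    (n - 2) * (n - 3) / 2 ≤
      {p : ℕ × ℕ | p.1 < p.2 ∧ p.2 < n ∧
        sideDisk O r (θ p.1) (θ (p.1 + 1)) ∩ sideDisk O r (θ p.2) (θ (p.2 + 1)) = ∅}.ncard :=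
  stmt_10_general O r hr n θ hmono hper
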